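/- arXiv:1905.07517 — 4 statements merged into one kernel-verified Lean document; each statement's English description precedes it below -/
import Mathlib

section
/- Let S = K[x_1,...,x_n], F a free S-module, M = Sf_1 + ... + Sf_s ⊆ F, and ≺ a monomial order on F with extension ≺' to F^h = S[t]e_1 ⊕ ... ⊕ S[t]e_m (comparing first by total degree including t, then by ≺ on dehomogenized monomials). If N is a graded submodule of F^h with S[t]f_1^h + ... + S[t]f_s^h ⊆ N ⊆ M^h, and G is a homogeneous Gröbner basis of N with respect to ≺', then the dehomogenization G^{deh} (setting t = 1) is a Gröbner basis of M with respect to ≺. -/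
open MvPolynomial

noncomputable section

variable (K : Type*) [Field K]

/-- The free module `F = S e₁ ⊕ ⋯ ⊕ S eₘ` over `S = K[x₁,…,xₙ]`, realized as `Fin m → S`. -/
abbrev FreeMod (n m : ℕ) := Fin m → MvPolynomial (Fin n) K

/-- The monomial `x^d · e_j` of the free module. -/
def mval {n m : ℕ} (p : Fin m × (Fin n →₀ ℕ)) : FreeMod K n m :=
  Pi.single p.1 (monomial p.2 (1 : K))

/-- Degree of the monomial `x^d e_j` relative to basis degrees `e`. -/
def mdeg {n m : ℕ} (e : Fin m → ℕ) (p : Fin m × (Fin n →₀ ℕ)) : ℕ :=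
  (p.2.sum fun _ k => k) + e p.1

/-- The degree-`z` homogeneous component of the graded free module (as a `K`-subspace). -/
def degComp (n m : ℕ) (e : Fin m → ℕ) (z : ℕ) : Submodule K (FreeMod K n m) :=
  Submodule.span K { f | ∃ p : Fin m × (Fin n →₀ ℕ), mdeg e p = z ∧ f = mval K p }

/-- The cone `h·K[u]`: the `K`-span of the products of `h` with monomials in the variables `u`. -/
def cone {n m : ℕ} (h : FreeMod K n m) (u : Set (Fin n)) : Submodule K (FreeMod K n m) :=
  Submodule.span K
    { f | ∃ d : Fin n →₀ ℕ, ↑d.support ⊆ u ∧ f = (monomial d (1 : K)) • h }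

/-- Data of a cone: a pivot, a set of variables, and the degree of the pivot. -/
abbrev ConeData (K : Type*) [Field K] (n m : ℕ) :=
  (FreeMod K n m) × Finset (Fin n) × ℕ

/-- `P` is a cone decomposition of the `K`-subspace `T ⊆ F`: pivots are nonzero homogeneous
of the recorded degree, and `T` is the internal direct sum of the cones of `P`. -/
def IsConeDecomp {n m : ℕ} (e : Fin m → ℕ) (P : Finset (ConeData K n m))
    (T : Submodule K (FreeMod K n m)) : Prop :=
  (∀ c ∈ P, c.1 ≠ 0 ∧ c.1 ∈ degComp K n m e c.2.2) ∧
  iSupIndep (fun c : P => cone K c.1.1 ↑c.1.2.1) ∧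
  (⨆ c : P, cone K c.1.1 ↑c.1.2.1) = T

/-- `P` is `q`-standard. -/
def IsStandard {n m : ℕ} (q : ℕ) (P : Finset (ConeData K n m)) : Prop :=
  (∀ c ∈ P, 0 < c.2.1.card → q ≤ c.2.2) ∧
  (∀ c ∈ P, 0 < c.2.1.card → ∀ d, q ≤ d → d ≤ c.2.2 →
    ∃ c' ∈ P, c'.2.2 = d ∧ c.2.1.card ≤ c'.2.1.card)

/-- `P` is `q`-exact: `q`-standard and the positive-dimensional cones have distinct degrees. -/
def IsExact {n m : ℕ} (q : ℕ) (P : Finset (ConeData K n m)) : Prop :=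
  IsStandard K q P ∧
  ∀ c ∈ P, ∀ c' ∈ P, 0 < c.2.1.card → 0 < c'.2.1.card → c ≠ c' → c.2.2 ≠ c'.2.2

/-- The Macaulay constants `b k = max({q} ∪ {1 + deg C : C ∈ P, dim C ≥ k})`. -/
def macaulay {n m : ℕ} (q : ℕ) (P : Finset (ConeData K n m)) (k : ℕ) : ℕ :=
  max q ((P.filter fun c => k ≤ c.2.1.card).sup fun c => c.2.2 + 1)

/-- The Hilbert function of a graded `K`-subspace `T ⊆ F`. -/
def hilb {n m : ℕ} (e : Fin m → ℕ) (T : Submodule K (FreeMod K n m)) (z : ℕ) : ℕ :=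
  Module.finrank K ↥(T ⊓ degComp K n m e z)

/-- The set of monomials (with their positions) appearing in `f ∈ F`. -/
def suppM {n m : ℕ} (f : FreeMod K n m) : Finset (Fin m × (Fin n →₀ ℕ)) :=
  Finset.univ.biUnion fun j => (f j).support.image fun d => (j, d)

/-- `p` is the leading monomial of `f` with respect to the monomial order `mo`. -/
def IsLM {n m : ℕ} (mo : LinearOrder (Fin m × (Fin n →₀ ℕ))) (f : FreeMod K n m)
    (p : Fin m × (Fin n →₀ ℕ)) : Prop :=
  p ∈ suppM K f ∧ ∀ p' ∈ suppM K f, mo.le p' p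

/-- The initial module of `M` w.r.t. the monomial order `mo`. -/
def initMod {n m : ℕ} (mo : LinearOrder (Fin m × (Fin n →₀ ℕ)))
    (M : Submodule (MvPolynomial (Fin n) K) (FreeMod K n m)) :
    Submodule (MvPolynomial (Fin n) K) (FreeMod K n m) :=
  Submodule.span _ { f | ∃ g ∈ M, ∃ p, IsLM K mo g p ∧ f = mval K p }

/-- `G` is a Gröbner basis of `M` w.r.t. `mo`. -/
def IsGB {n m : ℕ} (mo : LinearOrder (Fin m × (Fin n →₀ ℕ)))
    (G : Set (FreeMod K n m))
    (M : Submodule (MvPolynomial (Fin n) K) (FreeMod K n m)) : Prop :=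
  G ⊆ M ∧
  Submodule.span (MvPolynomial (Fin n) K)
      { f | ∃ g ∈ G, ∃ p, IsLM K mo g p ∧ f = mval K p } = initMod K mo M

/-- `mo` is a monomial order: compatible with multiplication and monomials of `S` are ≻ 1. -/
def IsMonomialOrder {n m : ℕ} (mo : LinearOrder (Fin m × (Fin n →₀ ℕ))) : Prop :=
  (∀ a b : Fin m × (Fin n →₀ ℕ), ∀ γ : Fin n →₀ ℕ,
      mo.lt a b → mo.lt (a.1, a.2 + γ) (b.1, b.2 + γ)) ∧
  (∀ (j : Fin m) (α γ : Fin n →₀ ℕ), γ ≠ 0 → mo.lt (j, α) (j, α + γ))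

/-- `G` is the reduced Gröbner basis of `M` w.r.t. `mo`. -/
def IsReducedGB {n m : ℕ} (mo : LinearOrder (Fin m × (Fin n →₀ ℕ)))
    (G : Set (FreeMod K n m))
    (M : Submodule (MvPolynomial (Fin n) K) (FreeMod K n m)) : Prop :=
  IsGB K mo G M ∧ (0 : FreeMod K n m) ∉ G ∧
  (∀ g ∈ G, ∀ p, IsLM K mo g p → (g p.1).coeff p.2 = 1) ∧
  (∀ g ∈ G, ∀ g' ∈ G, g ≠ g' → ∀ q ∈ suppM K g, ∀ p, IsLM K mo g' p →
    ¬ (p.1 = q.1 ∧ p.2 ≤ q.2))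

/-- The zeroth Fitting ideal of `F/M`: the ideal of `m × m` minors of a presentation matrix,
equivalently generated by determinants of matrices whose columns lie in `M`. -/
def fitt0 {n m : ℕ} (M : Submodule (MvPolynomial (Fin n) K) (FreeMod K n m)) :
    Ideal (MvPolynomial (Fin n) K) :=
  Ideal.span { p | ∃ A : Matrix (Fin m) (Fin m) (MvPolynomial (Fin n) K),
    (∀ i, (fun j => A j i) ∈ M) ∧ p = A.det }

end

noncomputable section

variable (K : Type*) [Field K]

/-- The degree of an element `f` of the free module (max degree of its monomials). -/
def fdeg {n m : ℕ} (e : Fin m → ℕ) (f : FreeMod K n m) : ℕ :=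
  (suppM K f).sup (mdeg e)

/-- Homogenization `f^h` of `f` with respect to a new variable `t` (the last variable). -/
def homogenize {n m : ℕ} (e : Fin m → ℕ) (f : FreeMod K n m) : FreeMod K (n + 1) m :=
  fun j => (AddMonoidAlgebra.coeff (f j)).sum fun dd c =>
    monomial (dd.mapDomain Fin.castSucc +
      Finsupp.single (Fin.last n) (fdeg K e f - ((dd.sum fun _ k => k) + e j))) c

/-- Dehomogenization of an element of `F^h` (substituting `t = 1`). -/
def dehomM {n m : ℕ} (f : FreeMod K (n + 1) m) : FreeMod K n m :=
  fun j => aeval (Fin.snoc MvPolynomial.X (1 : MvPolynomial (Fin n) K)) (f j)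

/-- Dehomogenization of a monomial position `(j, d)` of `F^h` (dropping the `t`-exponent). -/
def dehomMon {n m : ℕ} (p : Fin m × (Fin (n + 1) →₀ ℕ)) : Fin m × (Fin n →₀ ℕ) :=
  (p.1, Finsupp.comapDomain Fin.castSucc p.2 (Fin.castSucc_injective n).injOn)

end

/-!
Every `g ∈ M` is the dehomogenization of a homogeneous `H ∈ S[t]f₁ʰ + ⋯ + S[t]f_sʰ ⊆ N`
(homogenize a representation `g = ∑ qᵢfᵢ` term by term and pad with powers of `t`). On a
homogeneous element, dehomogenization is injective on monomials and turns `≺'` into `≺`, so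
`in_≺(g) = in_≺'(H)ᵈᵉʰ`. As `G` is a Gröbner basis of `N`, `in_≺'(H)` is divisible by
`in_≺'(g')` for some `g' ∈ G`; dehomogenizing, `in_≺(g'ᵈᵉʰ) = in_≺'(g')ᵈᵉʰ` divides `in_≺(g)`.
Finally `Gᵈᵉʰ ⊆ M` because dehomogenization maps `Mʰ` into `M`.
-/

section FreeModule

variable {K : Type*} [Field K] {n m : ℕ}

theorem mdeg_eq_degree (e : Fin m → ℕ) (p : Fin m × (Fin n →₀ ℕ)) :
    mdeg e p = p.2.degree + e p.1 := rfl

theorem mem_suppM {f : FreeMod K n m} {p : Fin m × (Fin n →₀ ℕ)} :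
    p ∈ suppM K f ↔ (f p.1).coeff p.2 ≠ 0 := by
  simp only [suppM, Finset.mem_biUnion, Finset.mem_univ, true_and, Finset.mem_image,
    mem_support_iff]
  exact ⟨fun ⟨_, _, hd, h⟩ => h ▸ hd, fun h => ⟨p.1, p.2, h, rfl⟩⟩

@[simp]
theorem suppM_zero : suppM K (0 : FreeMod K n m) = ∅ := by
  ext p
  simp [mem_suppM]

theorem suppM_add_subset (f g : FreeMod K n m) :
    suppM K (f + g) ⊆ suppM K f ∪ suppM K g := by
  intro p hp
  rw [Finset.mem_union, mem_suppM, mem_suppM]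
  by_contra! h
  exact mem_suppM.1 hp (by simp [h.1, h.2])

theorem suppM_mval (p : Fin m × (Fin n →₀ ℕ)) : suppM K (mval K p) = {p} := by
  ext ⟨j, d⟩
  rcases p with ⟨i, a⟩
  by_cases hj : i = j
  · subst hj
    simp [mem_suppM, mval, coeff_monomial, eq_comm]
  · simp [mem_suppM, mval, Ne.symm hj]

theorem monomial_smul_mval (γ : Fin n →₀ ℕ) (p : Fin m × (Fin n →₀ ℕ)) :
    monomial γ (1 : K) • mval K p = mval K (p.1, p.2 + γ) := by
  funext j
  by_cases hj : j = p.1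
  · subst hj
    simp [mval, monomial_mul, add_comm]
  · simp [mval, Pi.single_eq_of_ne hj]

theorem exists_isLM (mo : LinearOrder (Fin m × (Fin n →₀ ℕ))) {f : FreeMod K n m}
    (hf : (suppM K f).Nonempty) : ∃ p, IsLM K mo f p := by
  let := mo
  obtain ⟨p, hp, h⟩ := Finset.exists_max_image (suppM K f) id hf
  exact ⟨p, hp, h⟩

theorem IsLM.unique {mo : LinearOrder (Fin m × (Fin n →₀ ℕ))} {f : FreeMod K n m}
    {p q : Fin m × (Fin n →₀ ℕ)} (hp : IsLM K mo f p) (hq : IsLM K mo f q) : p = q :=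
  mo.le_antisymm _ _ (hq.2 p hp.1) (hp.2 q hq.1)

end FreeModule

section Groebner

variable {K : Type*} [Field K] {n m : ℕ}

theorem exists_le_of_mval_mem_span {P : Set (Fin m × (Fin n →₀ ℕ))} {q : Fin m × (Fin n →₀ ℕ)}
    (hq : mval K q ∈ Submodule.span (MvPolynomial (Fin n) K) (mval K '' P)) :
    ∃ p ∈ P, p.1 = q.1 ∧ p.2 ≤ q.2 := by
  classical
  suffices h : ∀ v ∈ Submodule.span (MvPolynomial (Fin n) K) (mval K '' P),
      ∀ r ∈ suppM K v, ∃ p ∈ P, p.1 = r.1 ∧ p.2 ≤ r.2 by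
    exact h _ hq q (by simp [suppM_mval])
  intro v hv
  induction hv using Submodule.span_induction with
  | mem _ hx =>
    obtain ⟨p, hp, rfl⟩ := hx
    intro r hr
    rw [suppM_mval, Finset.mem_singleton] at hr
    exact hr ▸ ⟨p, hp, rfl, le_rfl⟩
  | zero => simp
  | add x y _ _ hx hy =>
    intro r hr
    rcases Finset.mem_union.1 (suppM_add_subset x y hr) with hr | hr
    exacts [hx r hr, hy r hr]
  | smul a x _ hx =>
    intro r hr
    have hr' : r.2 ∈ (a * x r.1).support := mem_support_iff.2 (mem_suppM.1 hr)
    obtain ⟨α, -, d, hd, hαd⟩ := Finset.mem_add.1 (support_mul a (x r.1) hr')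
    obtain ⟨p, hp, hp1, hp2⟩ := hx (r.1, d) (mem_suppM.2 (mem_support_iff.1 hd))
    exact ⟨p, hp, hp1, hαd ▸ hp2.trans le_add_self⟩

theorem IsGB.exists_isLM_le {mo : LinearOrder (Fin m × (Fin n →₀ ℕ))}
    {G : Set (FreeMod K n m)} {M : Submodule (MvPolynomial (Fin n) K) (FreeMod K n m)}
    (hG : IsGB K mo G M) {h : FreeMod K n m} (hh : h ∈ M) {p : Fin m × (Fin n →₀ ℕ)}
    (hp : IsLM K mo h p) :
    ∃ g ∈ G, ∃ q, IsLM K mo g q ∧ q.1 = p.1 ∧ q.2 ≤ p.2 := by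
  have hinit : mval K p ∈ initMod K mo M := Submodule.subset_span ⟨h, hh, p, hp, rfl⟩
  have hmem : mval K p ∈ Submodule.span (MvPolynomial (Fin n) K)
      (mval K '' {q | ∃ g ∈ G, IsLM K mo g q}) := by
    rw [← hG.2] at hinit
    refine Submodule.span_mono ?_ hinit
    rintro _ ⟨g, hg, q, hq, rfl⟩
    exact ⟨q, ⟨g, hg, hq⟩, rfl⟩
  obtain ⟨q, ⟨g, hg, hq⟩, hq1, hq2⟩ := exists_le_of_mval_mem_span hmem
  exact ⟨g, hg, q, hq, hq1, hq2⟩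

theorem isGB_of_forall_exists_isLM_le (mo : LinearOrder (Fin m × (Fin n →₀ ℕ)))
    {G : Set (FreeMod K n m)} {M : Submodule (MvPolynomial (Fin n) K) (FreeMod K n m)}
    (hGM : G ⊆ M)
    (h : ∀ f ∈ M, ∀ p, IsLM K mo f p → ∃ g ∈ G, ∃ q, IsLM K mo g q ∧ q.1 = p.1 ∧ q.2 ≤ p.2) :
    IsGB K mo G M := by
  refine ⟨hGM, le_antisymm (Submodule.span_mono ?_) (Submodule.span_le.2 ?_)⟩
  · rintro _ ⟨g, hg, q, hq, rfl⟩
    exact ⟨g, hGM hg, q, hq, rfl⟩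
  · rintro _ ⟨f, hf, p, hp, rfl⟩
    obtain ⟨g, hg, q, hq, hq1, hq2⟩ := h f hf p hp
    obtain ⟨γ, hγ⟩ := le_iff_exists_add.1 hq2
    have hp_eq : p = (q.1, q.2 + γ) := Prod.ext hq1.symm hγ
    rw [hp_eq, ← monomial_smul_mval]
    exact Submodule.smul_mem _ _ (Submodule.subset_span ⟨g, hg, q, hq, rfl⟩)

end Groebner

noncomputable section Dehomogenization

variable {K : Type*} [Field K] {n m : ℕ}

def dehomExp (d : Fin (n + 1) →₀ ℕ) : Fin n →₀ ℕ :=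
  Finsupp.comapDomain Fin.castSucc d (Fin.castSucc_injective n).injOn

@[simp]
theorem dehomExp_apply (d : Fin (n + 1) →₀ ℕ) (i : Fin n) : dehomExp d i = d i.castSucc := rfl

theorem dehomMon_eq (p : Fin m × (Fin (n + 1) →₀ ℕ)) : dehomMon p = (p.1, dehomExp p.2) := rfl

theorem dehomExp_mono {d d' : Fin (n + 1) →₀ ℕ} (h : d ≤ d') : dehomExp d ≤ dehomExp d' :=
  fun i => h i.castSucc

theorem dehomExp_mapDomain_add_single (u : Fin n →₀ ℕ) (k : ℕ) :
    dehomExp (u.mapDomain Fin.castSucc + Finsupp.single (Fin.last n) k) = u := by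
  ext i
  simp [Finsupp.mapDomain_apply (Fin.castSucc_injective n)]

theorem dehomExp_mapDomain_castSucc (u : Fin n →₀ ℕ) :
    dehomExp (u.mapDomain Fin.castSucc) = u := by
  simpa using dehomExp_mapDomain_add_single u 0

theorem dehomExp_single_last (k : ℕ) : dehomExp (Finsupp.single (Fin.last n) k) = 0 := by
  simpa using dehomExp_mapDomain_add_single 0 k

theorem mapDomain_dehomExp_add_single (d : Fin (n + 1) →₀ ℕ) :
    (dehomExp d).mapDomain Fin.castSucc + Finsupp.single (Fin.last n) (d (Fin.last n)) = d := by
  ext i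
  induction i using Fin.lastCases with
  | last =>
    have hnot : Fin.last n ∉ Set.range (Fin.castSucc : Fin n → Fin (n + 1)) := by
      rintro ⟨i, hi⟩
      exact (Fin.castSucc_lt_last i).ne hi
    simp [Finsupp.mapDomain_of_notMem_range _ _ hnot]
  | cast i =>
    simp [Finsupp.mapDomain_apply (Fin.castSucc_injective n)]

theorem degree_eq_degree_dehomExp_add (d : Fin (n + 1) →₀ ℕ) :
    d.degree = (dehomExp d).degree + d (Fin.last n) := by
  conv_lhs => rw [← mapDomain_dehomExp_add_single d]
  simp

theorem eq_of_dehomExp_eq {d d' : Fin (n + 1) →₀ ℕ} (hdeg : d.degree = d'.degree)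
    (h : dehomExp d = dehomExp d') : d = d' := by
  have hlast : d (Fin.last n) = d' (Fin.last n) := by
    have := degree_eq_degree_dehomExp_add d
    have := degree_eq_degree_dehomExp_add d'
    rw [h] at *
    omega
  rw [← mapDomain_dehomExp_add_single d, ← mapDomain_dehomExp_add_single d', h, hlast]

theorem aeval_snoc_monomial (d : Fin (n + 1) →₀ ℕ) (c : K) :
    aeval (Fin.snoc X 1 : Fin (n + 1) → MvPolynomial (Fin n) K) (monomial d c) =
      monomial (dehomExp d) c := by
  rw [← mapDomain_dehomExp_add_single d, ← mul_one c, ← monomial_mul, ← rename_monomial,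
    map_mul, aeval_rename, dehomExp_mapDomain_add_single]
  have hX : (Fin.snoc X 1 : Fin (n + 1) → MvPolynomial (Fin n) K) ∘ Fin.castSucc = X :=
    funext fun i => Fin.snoc_castSucc (α := fun _ => MvPolynomial (Fin n) K) _ _ i
  rw [hX, aeval_X_left_apply, aeval_monomial]
  simp

theorem exists_eq_of_mem_support_sum_monomial {R ι τ : Type*} [CommSemiring R] {s : Finset ι}
    {ψ : ι → τ →₀ ℕ} {c : ι → R} {u : τ →₀ ℕ}
    (hu : u ∈ (∑ i ∈ s, monomial (ψ i) (c i)).support) : ∃ i ∈ s, ψ i = u := by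
  classical
  obtain ⟨i, hi, hu⟩ := Finset.mem_biUnion.1 (support_sum hu)
  exact ⟨i, hi, (Finset.mem_singleton.1 (support_monomial_subset hu)).symm⟩

theorem aeval_snoc_eq_sum (q : MvPolynomial (Fin (n + 1)) K) :
    aeval (Fin.snoc X 1 : Fin (n + 1) → MvPolynomial (Fin n) K) q =
      ∑ d ∈ q.support, monomial (dehomExp d) (coeff d q) := by
  conv_lhs => rw [q.as_sum]
  simp only [map_sum, aeval_snoc_monomial]

theorem dehomM_add (h h' : FreeMod K (n + 1) m) :
    dehomM K (h + h') = dehomM K h + dehomM K h' :=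
  funext fun _ => map_add _ _ _

theorem dehomM_smul (q : MvPolynomial (Fin (n + 1)) K) (h : FreeMod K (n + 1) m) :
    dehomM K (q • h) = aeval (Fin.snoc X 1 : Fin (n + 1) → MvPolynomial (Fin n) K) q • dehomM K h :=
  funext fun _ => map_mul _ _ _

theorem dehomM_zero : dehomM K (0 : FreeMod K (n + 1) m) = 0 :=
  funext fun _ => map_zero _

end Dehomogenization

section Homogeneous

variable {K : Type*} [Field K] {n m : ℕ} {e : Fin m → ℕ} {z : ℕ}

def IsHomogeneousOfDeg (e : Fin m → ℕ) (z : ℕ) (h : FreeMod K n m) : Prop :=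
  ∀ p ∈ suppM K h, mdeg e p = z

theorem isHomogeneousOfDeg_zero : IsHomogeneousOfDeg e z (0 : FreeMod K n m) := by
  simp [IsHomogeneousOfDeg]

theorem IsHomogeneousOfDeg.add {h h' : FreeMod K n m} (hh : IsHomogeneousOfDeg e z h)
    (hh' : IsHomogeneousOfDeg e z h') : IsHomogeneousOfDeg e z (h + h') := fun p hp =>
  (Finset.mem_union.1 (suppM_add_subset h h' hp)).elim (hh p) (hh' p)

theorem IsHomogeneousOfDeg.monomial_smul {h : FreeMod K n m} (hh : IsHomogeneousOfDeg e z h)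
    (d : Fin n →₀ ℕ) (c : K) : IsHomogeneousOfDeg e (d.degree + z) (monomial d c • h) := by
  intro p hp
  have hcoeff := mem_suppM.1 hp
  simp only [Pi.smul_apply, smul_eq_mul, coeff_monomial_mul'] at hcoeff
  split_ifs at hcoeff with hd
  · have hz : (p.2 - d).degree + e p.1 = z :=
      hh (p.1, p.2 - d) (mem_suppM.2 (right_ne_zero_of_mul hcoeff))
    rw [mdeg_eq_degree]
    rw [← add_tsub_cancel_of_le hd, map_add]
    omega
  · exact absurd rfl hcoeff

theorem isHomogeneousOfDeg_of_mem_degComp {h : FreeMod K n m} (hh : h ∈ degComp K n m e z) :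
    IsHomogeneousOfDeg e z h := by
  induction hh using Submodule.span_induction with
  | mem _ hx =>
    obtain ⟨p, hp, rfl⟩ := hx
    intro q hq
    rw [suppM_mval, Finset.mem_singleton] at hq
    rwa [hq]
  | zero => exact isHomogeneousOfDeg_zero
  | add _ _ _ _ hx hy => exact hx.add hy
  | smul c x _ hx =>
    intro p hp
    refine hx p (mem_suppM.2 fun h0 => mem_suppM.1 hp ?_)
    simp [h0]

end Homogeneous

section DehomogenizeHomogeneous

variable {K : Type*} [Field K] {n m : ℕ} {e : Fin m → ℕ} {z : ℕ}

theorem suppM_dehomM_subset (h : FreeMod K (n + 1) m) :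
    suppM K (dehomM K h) ⊆ (suppM K h).image dehomMon := by
  intro r hr
  have hr' : r.2 ∈ (dehomM K h r.1).support := mem_support_iff.2 (mem_suppM.1 hr)
  rw [dehomM, aeval_snoc_eq_sum] at hr'
  obtain ⟨d, hd, hdr⟩ := exists_eq_of_mem_support_sum_monomial hr'
  exact Finset.mem_image.2 ⟨(r.1, d), mem_suppM.2 (mem_support_iff.1 hd), Prod.ext rfl hdr⟩

theorem coeff_dehomM_of_isHomogeneousOfDeg {h : FreeMod K (n + 1) m}
    (hh : IsHomogeneousOfDeg e z h) {p : Fin m × (Fin (n + 1) →₀ ℕ)} (hp : p ∈ suppM K h) :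
    (dehomM K h p.1).coeff (dehomExp p.2) = (h p.1).coeff p.2 := by
  classical
  rw [dehomM, aeval_snoc_eq_sum, coeff_sum]
  refine (Finset.sum_eq_single_of_mem p.2 (mem_support_iff.2 (mem_suppM.1 hp)) ?_).trans ?_
  · -- the `t`-exponent of a monomial of `h` is determined by its degree
    intro d hd hne
    have hdeg : d.degree + e p.1 = p.2.degree + e p.1 :=
      (hh (p.1, d) (mem_suppM.2 (mem_support_iff.1 hd))).trans (hh p hp).symm
    rw [coeff_monomial, if_neg fun heq => hne (eq_of_dehomExp_eq (by omega) heq)]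
  · rw [coeff_monomial, if_pos rfl]

theorem IsLM.dehomM {mo : LinearOrder (Fin m × (Fin n →₀ ℕ))}
    {mo' : LinearOrder (Fin m × (Fin (n + 1) →₀ ℕ))}
    (hmo' : ∀ a b, mdeg e a = mdeg e b → (mo'.lt a b ↔ mo.lt (dehomMon a) (dehomMon b)))
    {h : FreeMod K (n + 1) m} (hh : IsHomogeneousOfDeg e z h) {p : Fin m × (Fin (n + 1) →₀ ℕ)}
    (hp : IsLM K mo' h p) : IsLM K mo (dehomM K h) (dehomMon p) := by
  refine ⟨?_, fun q hq => ?_⟩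
  · rw [mem_suppM, dehomMon_eq, coeff_dehomM_of_isHomogeneousOfDeg hh hp.1]
    exact mem_suppM.1 hp.1
  · obtain ⟨q', hq', rfl⟩ := Finset.mem_image.1 (suppM_dehomM_subset h hq)
    have hnlt : ¬ mo.lt (dehomMon p) (dehomMon q') := fun hlt =>
      ((mo'.lt_iff_le_not_ge _ _).1 ((hmo' p q' ((hh p hp.1).trans (hh q' hq').symm)).2 hlt)).2
        (hp.2 q' hq')
    rcases mo.le_total (dehomMon q') (dehomMon p) with hle | hle
    · exact hle
    · by_contra hne
      exact hnlt ((mo.lt_iff_le_not_ge _ _).2 ⟨hle, hne⟩)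

end DehomogenizeHomogeneous

section Homogenization

variable {K : Type*} [Field K] {n m : ℕ}

theorem homogenize_apply (e : Fin m → ℕ) (f : FreeMod K n m) (j : Fin m) :
    homogenize K e f j = ∑ d ∈ (f j).support,
      monomial (d.mapDomain Fin.castSucc +
        Finsupp.single (Fin.last n) (fdeg K e f - (d.degree + e j))) (coeff d (f j)) :=
  sum_def

theorem dehomM_homogenize (e : Fin m → ℕ) (f : FreeMod K n m) :
    dehomM K (homogenize K e f) = f := by
  funext j
  rw [dehomM, homogenize_apply, map_sum]
  simp only [aeval_snoc_monomial, dehomExp_mapDomain_add_single]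
  exact (f j).as_sum.symm

theorem isHomogeneousOfDeg_homogenize (e : Fin m → ℕ) (f : FreeMod K n m) :
    IsHomogeneousOfDeg e (fdeg K e f) (homogenize K e f) := by
  intro p hp
  have hp' : p.2 ∈ (homogenize K e f p.1).support := mem_support_iff.2 (mem_suppM.1 hp)
  rw [homogenize_apply] at hp'
  obtain ⟨d, hd, hdp⟩ := exists_eq_of_mem_support_sum_monomial hp'
  have hle : d.degree + e p.1 ≤ fdeg K e f :=
    Finset.le_sup (f := mdeg e) (b := (p.1, d)) (mem_suppM.2 (mem_support_iff.1 hd))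
  rw [mdeg_eq_degree, ← hdp, map_add, Finsupp.degree_mapDomain, Finsupp.degree_single]
  omega

theorem dehomM_mem_of_mem_span_homogenize {e : Fin m → ℕ}
    {M : Submodule (MvPolynomial (Fin n) K) (FreeMod K n m)} {h : FreeMod K (n + 1) m}
    (hh : h ∈ Submodule.span (MvPolynomial (Fin (n + 1)) K)
      {h | ∃ g ∈ M, h = homogenize K e g}) :
    dehomM K h ∈ M := by
  induction hh using Submodule.span_induction with
  | mem _ hx =>
    obtain ⟨g, hg, rfl⟩ := hx
    rwa [dehomM_homogenize]
  | zero => rw [dehomM_zero]; exact M.zero_mem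
  | add _ _ _ _ hx hy => rw [dehomM_add]; exact M.add_mem hx hy
  | smul _ _ _ hx => rw [dehomM_smul]; exact M.smul_mem _ hx

def HasHomogeneousLift (e : Fin m → ℕ)
    (N : Submodule (MvPolynomial (Fin (n + 1)) K) (FreeMod K (n + 1) m)) (g : FreeMod K n m) :
    Prop :=
  ∃ H ∈ N, ∃ z, IsHomogeneousOfDeg e z H ∧ dehomM K H = g

namespace HasHomogeneousLift

variable {e : Fin m → ℕ} {N : Submodule (MvPolynomial (Fin (n + 1)) K) (FreeMod K (n + 1) m)}
  {g g' : FreeMod K n m}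

theorem add (hg : HasHomogeneousLift e N g) (hg' : HasHomogeneousLift e N g') :
    HasHomogeneousLift e N (g + g') := by
  obtain ⟨H, hH, z, hz, rfl⟩ := hg
  obtain ⟨H', hH', z', hz', rfl⟩ := hg'
  -- bring both lifts to degree `z' + z` by multiplying with powers of `t`
  have h₁ := hz.monomial_smul (Finsupp.single (Fin.last n) z') (1 : K)
  have h₂ := hz'.monomial_smul (Finsupp.single (Fin.last n) z) (1 : K)
  rw [Finsupp.degree_single] at h₁ h₂
  refine ⟨_, N.add_mem (N.smul_mem _ hH) (N.smul_mem _ hH'), z' + z,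
    h₁.add (add_comm z z' ▸ h₂), ?_⟩
  rw [dehomM_add, dehomM_smul, dehomM_smul, aeval_snoc_monomial, aeval_snoc_monomial,
    dehomExp_single_last, dehomExp_single_last, ← one_def, one_smul, one_smul]

theorem smul (hg : HasHomogeneousLift e N g) (a : MvPolynomial (Fin n) K) :
    HasHomogeneousLift e N (a • g) := by
  induction a using MvPolynomial.induction_on' with
  | monomial d c =>
    obtain ⟨H, hH, z, hz, rfl⟩ := hg
    refine ⟨monomial (d.mapDomain Fin.castSucc) c • H, N.smul_mem _ hH, _,
      hz.monomial_smul _ c, ?_⟩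
    rw [dehomM_smul, aeval_snoc_monomial, dehomExp_mapDomain_castSucc]
  | add a b ha hb => exact add_smul a b g ▸ ha.add hb

end HasHomogeneousLift

theorem hasHomogeneousLift_of_mem_span {s : ℕ} (e : Fin m → ℕ) (f : Fin s → FreeMod K n m)
    {g : FreeMod K n m} (hg : g ∈ Submodule.span (MvPolynomial (Fin n) K) (Set.range f)) :
    HasHomogeneousLift e
      (Submodule.span (MvPolynomial (Fin (n + 1)) K) (Set.range fun i => homogenize K e (f i)))
      g := by
  induction hg using Submodule.span_induction with
  | mem _ hx =>
    obtain ⟨i, rfl⟩ := hx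
    exact ⟨_, Submodule.subset_span ⟨i, rfl⟩, _, isHomogeneousOfDeg_homogenize e (f i),
      dehomM_homogenize e (f i)⟩
  | zero => exact ⟨0, Submodule.zero_mem _, 0, isHomogeneousOfDeg_zero, dehomM_zero⟩
  | add _ _ _ _ hx hy => exact hx.add hy
  | smul a _ _ hx => exact hx.smul a

end Homogenization

theorem stmt_3_general (K : Type*) [Field K] (n m s : ℕ) (e : Fin m → ℕ)
    (mo : LinearOrder (Fin m × (Fin n →₀ ℕ)))
    (mo' : LinearOrder (Fin m × (Fin (n + 1) →₀ ℕ)))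
    (hmo' : ∀ a b : Fin m × (Fin (n + 1) →₀ ℕ), mo'.lt a b ↔
      (mdeg e a < mdeg e b ∨
        (mdeg e a = mdeg e b ∧ mo.lt (dehomMon a) (dehomMon b))))
    (f : Fin s → FreeMod K n m)
    (M : Submodule (MvPolynomial (Fin n) K) (FreeMod K n m))
    (hM : M = Submodule.span (MvPolynomial (Fin n) K) (Set.range f))
    (N : Submodule (MvPolynomial (Fin (n + 1)) K) (FreeMod K (n + 1) m))
    (hN1 : Submodule.span (MvPolynomial (Fin (n + 1)) K)
      (Set.range fun i => homogenize K e (f i)) ≤ N)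
    (hN2 : N ≤ Submodule.span (MvPolynomial (Fin (n + 1)) K)
      { h | ∃ g ∈ M, h = homogenize K e g })
    (G : Set (FreeMod K (n + 1) m))
    (hGhom : ∀ g ∈ G, ∃ z, g ∈ degComp K (n + 1) m e z)
    (hGB : IsGB K mo' G N) :
    IsGB K mo (dehomM K '' G) M := by
  have hmo'_eq : ∀ a b, mdeg e a = mdeg e b → (mo'.lt a b ↔ mo.lt (dehomMon a) (dehomMon b)) :=
    fun a b hab => by simp [hmo', hab]
  have hGM : dehomM K '' G ⊆ M := by
    rintro _ ⟨g, hg, rfl⟩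
    exact dehomM_mem_of_mem_span_homogenize (hN2 (hGB.1 hg))
  refine isGB_of_forall_exists_isLM_le mo hGM fun g hg p hp => ?_
  obtain ⟨H, hH, z, hHz, rfl⟩ := hasHomogeneousLift_of_mem_span e f (hM ▸ hg)
  obtain ⟨p', hp'⟩ := exists_isLM mo' (Finset.Nonempty.of_image ⟨p, suppM_dehomM_subset H hp.1⟩)
  obtain rfl : p = dehomMon p' := hp.unique (hp'.dehomM hmo'_eq hHz)
  obtain ⟨g', hg', q, hq, hq1, hq2⟩ := hGB.exists_isLM_le (hN1 hH) hp'
  obtain ⟨z', hz'⟩ := hGhom g' hg'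
  exact ⟨dehomM K g', ⟨g', hg', rfl⟩, dehomMon q,
    hq.dehomM hmo'_eq (isHomogeneousOfDeg_of_mem_degComp hz'), hq1, dehomExp_mono hq2⟩

/-- If `S[t]f₁^h + ⋯ + S[t]f_s^h ⊆ N ⊆ M^h` with `N` graded and `G` is a
homogeneous Gröbner basis of `N` w.r.t. the extension `≺'` of `≺`, then `G^{deh}` is a
Gröbner basis of `M = Sf₁ + ⋯ + Sf_s` w.r.t. `≺`. -/
theorem stmt_3 (K : Type*) [Field K] (n m s : ℕ) (e : Fin m → ℕ)
    (mo : LinearOrder (Fin m × (Fin n →₀ ℕ))) (hmo : IsMonomialOrder mo)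
    (mo' : LinearOrder (Fin m × (Fin (n + 1) →₀ ℕ)))
    (hmo' : ∀ a b : Fin m × (Fin (n + 1) →₀ ℕ), mo'.lt a b ↔
      (mdeg e a < mdeg e b ∨
        (mdeg e a = mdeg e b ∧ mo.lt (dehomMon a) (dehomMon b))))
    (f : Fin s → FreeMod K n m)
    (M : Submodule (MvPolynomial (Fin n) K) (FreeMod K n m))
    (hM : M = Submodule.span (MvPolynomial (Fin n) K) (Set.range f))
    (N : Submodule (MvPolynomial (Fin (n + 1)) K) (FreeMod K (n + 1) m))
    (hN1 : Submodule.span (MvPolynomial (Fin (n + 1)) K)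
      (Set.range fun i => homogenize K e (f i)) ≤ N)
    (hN2 : N ≤ Submodule.span (MvPolynomial (Fin (n + 1)) K)
      { h | ∃ g ∈ M, h = homogenize K e g })
    (hNgraded : N = Submodule.span (MvPolynomial (Fin (n + 1)) K)
      { h : FreeMod K (n + 1) m | h ∈ N ∧ ∃ z, h ∈ degComp K (n + 1) m e z })
    (G : Set (FreeMod K (n + 1) m))
    (hGhom : ∀ g ∈ G, ∃ z, g ∈ degComp K (n + 1) m e z)
    (hGB : IsGB K mo' G N) :
    IsGB K mo (dehomM K '' G) M :=
  stmt_3_general K n m s e mo mo' hmo' f M hM N hN1 hN2 G hGhom hGB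
end

section
/- Let P be a q-exact cone decomposition of a K-subspace T ⊆ F with Macaulay constants b_0 ≥ b_1 ≥ ... ≥ b_{n+1} = q. Then for each i = 1,...,n and each degree d with b_{i+1} ≤ d < b_i, there is exactly one cone C ∈ P of positive dimension with deg(C) = d, and that cone has dim(C) = i. In particular b_i = b_{i+1} + |{C ∈ P⁺ : dim(C) = i}| for i = 1,...,n. -/
open MvPolynomial

/-! If `q ≤ d < b_k` with `k ≥ 1`, standardness yields a cone of degree `d` and dimension
`≥ k`; by exactness it is the only positive-dimensional cone of degree `d`. Hence a
positive-dimensional cone has dimension `≥ k` exactly when its degree is `< b_k`, so the degree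
map is a bijection from the cones of dimension `i` onto `[b_{i+1}, b_i)`. -/

section Macaulay

variable {K : Type*} [Field K] {n m q : ℕ} {P : Finset (ConeData K n m)}

lemma le_macaulay (k : ℕ) : q ≤ macaulay K q P k :=
  le_max_left _ _

lemma macaulay_antitone : Antitone (macaulay K q P) := fun _ _ hkl =>
  max_le_max le_rfl <| Finset.sup_mono fun _ hc =>
    Finset.mem_filter.2 ⟨(Finset.mem_filter.1 hc).1, hkl.trans (Finset.mem_filter.1 hc).2⟩

lemma deg_lt_macaulay {c : ConeData K n m} (hc : c ∈ P) {k : ℕ} (hk : k ≤ c.2.1.card) :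
    c.2.2 < macaulay K q P k :=
  Nat.lt_of_succ_le <| (Finset.le_sup (f := fun c : ConeData K n m => c.2.2 + 1)
    (Finset.mem_filter.2 ⟨hc, hk⟩)).trans (le_max_right _ _)

lemma IsStandard.exists_deg_eq_of_lt_macaulay (hst : IsStandard K q P) {k d : ℕ} (hk : 1 ≤ k)
    (hq : q ≤ d) (hd : d < macaulay K q P k) :
    ∃ c ∈ P, c.2.2 = d ∧ k ≤ c.2.1.card := by
  obtain ⟨c₀, hc₀, hd₀⟩ := Finset.lt_sup_iff.1 <| (lt_max_iff.1 hd).resolve_left hq.not_gt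
  obtain ⟨hc₀P, hk₀⟩ := Finset.mem_filter.1 hc₀
  obtain ⟨c, hcP, hdeg, hdim⟩ := hst.2 c₀ hc₀P (hk.trans hk₀) d hq (Nat.le_of_lt_succ hd₀)
  exact ⟨c, hcP, hdeg, hk₀.trans hdim⟩

lemma IsExact.eq_of_deg_eq (hex : IsExact K q P) {c c' : ConeData K n m} (hc : c ∈ P)
    (hc' : c' ∈ P) (hpos : 0 < c.2.1.card) (hpos' : 0 < c'.2.1.card) (hdeg : c.2.2 = c'.2.2) :
    c = c' :=
  by_contra fun hne => hex.2 c hc c' hc' hpos hpos' hne hdeg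

lemma IsExact.le_card_of_deg_lt_macaulay (hex : IsExact K q P) {c : ConeData K n m}
    (hc : c ∈ P) (hpos : 0 < c.2.1.card) {k : ℕ} (hk : 1 ≤ k)
    (hd : c.2.2 < macaulay K q P k) : k ≤ c.2.1.card := by
  obtain ⟨c', hc', hdeg, hdim⟩ :=
    hex.1.exists_deg_eq_of_lt_macaulay hk (hex.1.1 c hc hpos) hd
  rwa [← hex.eq_of_deg_eq hc' hc (hk.trans hdim) hpos hdeg]

lemma IsExact.card_eq_iff_deg_mem_Ico (hex : IsExact K q P) {c : ConeData K n m} (hc : c ∈ P)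
    (hpos : 0 < c.2.1.card) {i : ℕ} (hi : 1 ≤ i) :
    c.2.1.card = i ↔ c.2.2 ∈ Finset.Ico (macaulay K q P (i + 1)) (macaulay K q P i) := by
  rw [Finset.mem_Ico]
  constructor
  · rintro rfl
    refine ⟨not_lt.1 fun hlt => ?_, deg_lt_macaulay hc le_rfl⟩
    have := hex.le_card_of_deg_lt_macaulay hc hpos (Nat.le_add_left 1 _) hlt
    omega
  · rintro ⟨hge, hlt⟩
    have hle := hex.le_card_of_deg_lt_macaulay hc hpos hi hlt
    have : ¬ i + 1 ≤ c.2.1.card := fun h => (deg_lt_macaulay hc h).not_ge hge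
    omega

lemma IsExact.existsUnique_deg_eq (hex : IsExact K q P) {i d : ℕ} (hi : 1 ≤ i)
    (hd₁ : macaulay K q P (i + 1) ≤ d) (hd₂ : d < macaulay K q P i) :
    ∃! c : ConeData K n m, c ∈ P ∧ 0 < c.2.1.card ∧ c.2.2 = d := by
  obtain ⟨c, hc, hdeg, hdim⟩ :=
    hex.1.exists_deg_eq_of_lt_macaulay hi ((le_macaulay _).trans hd₁) hd₂
  have hpos : 0 < c.2.1.card := hi.trans hdim
  exact ⟨c, ⟨hc, hpos, hdeg⟩, fun c' ⟨hc', hpos', hdeg'⟩ =>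
    hex.eq_of_deg_eq hc' hc hpos' hpos (hdeg'.trans hdeg.symm)⟩

lemma IsExact.card_filter_card_eq (hex : IsExact K q P) {i : ℕ} (hi : 1 ≤ i) :
    (P.filter fun c => c.2.1.card = i).card = macaulay K q P i - macaulay K q P (i + 1) := by
  rw [← Nat.card_Ico]
  refine Finset.card_bij (fun c _ => c.2.2) (fun c hc => ?_) (fun c hc c' hc' hdeg => ?_)
    (fun d hd => ?_)
  · obtain ⟨hcP, rfl⟩ := Finset.mem_filter.1 hc
    exact (hex.card_eq_iff_deg_mem_Ico hcP (by omega) hi).1 rfl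
  · obtain ⟨hcP, hci⟩ := Finset.mem_filter.1 hc
    obtain ⟨hc'P, hc'i⟩ := Finset.mem_filter.1 hc'
    exact hex.eq_of_deg_eq hcP hc'P (by omega) (by omega) hdeg
  · obtain ⟨hd₁, hd₂⟩ := Finset.mem_Ico.1 hd
    obtain ⟨c, ⟨hc, hpos, rfl⟩, -⟩ := hex.existsUnique_deg_eq hi hd₁ hd₂
    exact ⟨c, Finset.mem_filter.2 ⟨hc, (hex.card_eq_iff_deg_mem_Ico hc hpos hi).2 hd⟩, rfl⟩

end Macaulay

theorem stmt_6_general (K : Type*) [Field K] (n m q : ℕ)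
    (P : Finset (ConeData K n m))
    (hex : IsExact K q P) :
    (∀ i : ℕ, 1 ≤ i → i ≤ n → ∀ d : ℕ,
      macaulay K q P (i + 1) ≤ d → d < macaulay K q P i →
      (∃! c : ConeData K n m, c ∈ P ∧ 0 < c.2.1.card ∧ c.2.2 = d) ∧
      (∀ c ∈ P, 0 < c.2.1.card → c.2.2 = d → c.2.1.card = i)) ∧
    (∀ i : ℕ, 1 ≤ i → i ≤ n →
      macaulay K q P i =
        macaulay K q P (i + 1) + (P.filter fun c => c.2.1.card = i).card) := by
  refine ⟨fun i hi _ d hd₁ hd₂ => ⟨hex.existsUnique_deg_eq hi hd₁ hd₂, ?_⟩, fun i hi _ => ?_⟩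
  · rintro c hc hpos rfl
    exact (hex.card_eq_iff_deg_mem_Ico hc hpos hi).2 (Finset.mem_Ico.2 ⟨hd₁, hd₂⟩)
  · have := macaulay_antitone (K := K) (q := q) (P := P) (Nat.le_add_right i 1)
    rw [hex.card_filter_card_eq hi]
    omega

/-- For a `q`-exact cone decomposition `P` of `T` with Macaulay constants
`b`, for each `i = 1,…,n` and each `d` with `b_{i+1} ≤ d < b_i` there is exactly one
positive-dimensional cone of `P` of degree `d`, which has dimension `i`; consequently
`b_i = b_{i+1} + #{C ∈ P⁺ : dim C = i}`. -/
theorem stmt_6 (K : Type*) [Field K] (n m q : ℕ) (e : Fin m → ℕ)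
    (T : Submodule K (FreeMod K n m)) (P : Finset (ConeData K n m))
    (hdec : IsConeDecomp K e P T) (hex : IsExact K q P) :
    (∀ i : ℕ, 1 ≤ i → i ≤ n → ∀ d : ℕ,
      macaulay K q P (i + 1) ≤ d → d < macaulay K q P i →
      (∃! c : ConeData K n m, c ∈ P ∧ 0 < c.2.1.card ∧ c.2.2 = d) ∧
      (∀ c ∈ P, 0 < c.2.1.card → c.2.2 = d → c.2.1.card = i)) ∧
    (∀ i : ℕ, 1 ≤ i → i ≤ n →
      macaulay K q P i =
        macaulay K q P (i + 1) + (P.filter fun c => c.2.1.card = i).card) :=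
  stmt_6_general K n m q P hex
end

section
/- Let J = (x_1^{d_1},...,x_{n−r}^{d_{n−r}}) ⊆ S = K[x_1,...,x_n] and F = S e_1 ⊕ ... ⊕ S e_m a graded free module. The Hilbert polynomial of F/JF has degree r − 1; consequently, for any D-exact cone decomposition P of N_{JF}, the Macaulay constants satisfy b_{n+1} = b_n = ... = b_{r+1} = D. -/
open MvPolynomial

noncomputable section
variable (K : Type*) [Field K]

/-- `N_M`: the `K`-span of the monomials of `F` not lying in the monomial submodule `M`. -/
def monComplement {n m : ℕ} (M : Submodule (MvPolynomial (Fin n) K) (FreeMod K n m)) :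
    Submodule K (FreeMod K n m) :=
  Submodule.span K { f | ∃ p : Fin m × (Fin n →₀ ℕ), f = mval K p ∧ mval K p ∉ M }

/-- `JF` for `J = (x₁^{d₁},…,x_{n−r}^{d_{n−r}})`. -/
def purePowersF (n m r : ℕ) (d : Fin n → ℕ) :
    Submodule (MvPolynomial (Fin n) K) (FreeMod K n m) :=
  Submodule.span (MvPolynomial (Fin n) K)
    { f | ∃ (i : Fin n) (j : Fin m), (i : ℕ) < n - r ∧
        f = Pi.single j ((MvPolynomial.X i : MvPolynomial (Fin n) K) ^ d i) }

end

/-!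
A monomial `x^a e_j` lies outside `JF` exactly when `a_i < d_i` for the `n - r` variables carrying
the pure powers. Such a monomial splits uniquely into a monomial of the finite "box" in those
variables times an arbitrary monomial in the remaining `r` variables, so for `z` beyond the
degrees of the box the Hilbert function of `N_{JF}` is `∑_{x ∈ box} C(z - deg x + r - 1, r - 1)`:
a polynomial of degree `r - 1`, with leading coefficient `#box / (r - 1)!`.

A cone `h·K[u]` with `#u > r` must use some variable `x_i` with `i < n - r`; then `x_i^{d_i} h`
lies in the cone but has a monomial in `JF`, so it is not in `N_{JF}`. Hence no cone of a
decomposition of `N_{JF}` has dimension above `r`, and `b_k = D` for `k > r`.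
-/

open Finset

lemma Submodule.single_mem_pi_iff {R κ : Type*} [CommRing R] [DecidableEq κ] {I : Ideal R}
    {j : κ} {x : R} : Pi.single j x ∈ Submodule.pi Set.univ (fun _ => I) ↔ x ∈ I := by
  refine ⟨fun h => by simpa using h j trivial, fun h j' _ => ?_⟩
  rcases eq_or_ne j' j with rfl | hj
  · simpa using h
  · simp [Pi.single_eq_of_ne hj]

lemma Submodule.span_single_eq_pi {R κ : Type*} [CommRing R] [Fintype κ] [DecidableEq κ]
    (s : Set R) :
    Submodule.span R {f : κ → R | ∃ x ∈ s, ∃ j, f = Pi.single j x} =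
      Submodule.pi Set.univ fun _ => Ideal.span s := by
  apply le_antisymm
  · rw [Submodule.span_le]
    rintro _ ⟨x, hx, j, rfl⟩
    exact Submodule.single_mem_pi_iff.mpr (Ideal.subset_span hx)
  · intro f hf
    rw [← Finset.univ_sum_single f]
    refine Submodule.sum_mem _ fun j _ => ?_
    have hmap : Submodule.map (LinearMap.single R (fun _ => R) j) (Ideal.span s) ≤
        Submodule.span R {f : κ → R | ∃ x ∈ s, ∃ j, f = Pi.single j x} := by
      rw [Ideal.span, Submodule.map_span_le]
      exact fun x hx => Submodule.subset_span ⟨x, hx, j, rfl⟩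
    exact hmap ⟨f j, hf j trivial, rfl⟩

lemma Finsupp.filter_add_of_support_subset {ι M : Type*} [Fintype ι] [DecidableEq ι]
    [AddMonoid M] {s : Finset ι} {a c : ι →₀ M} (ha : a.support ⊆ s) (hc : c.support ⊆ sᶜ) :
    (a + c).filter (· ∈ s) = a := by
  ext i
  by_cases hi : i ∈ s
  · have : c i = 0 := Finsupp.notMem_support_iff.mp fun h => by simpa [hi] using hc h
    simp [hi, this]
  · have : a i = 0 := Finsupp.notMem_support_iff.mp fun h => hi (ha h)
    simp [hi, this]

namespace Polynomial

lemma coeff_sum_preHilbertPoly_self {F ι : Type*} [Field F] [CharZero F] (s : Finset ι)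
    (d : ℕ) (k : ι → ℕ) :
    (∑ x ∈ s, preHilbertPoly F d (k x)).coeff d = #s * ((d.factorial : ℕ) : F)⁻¹ := by
  simp [finsetSum_coeff, coeff_preHilbertPoly_self]

theorem exists_polynomial_of_eventually_eq_sum_choose {ι : Type*} {s : Finset ι}
    (hs : s.Nonempty) (k : ι → ℕ) (r : ℕ) {h : ℕ → ℕ}
    (hh : ∀ z, (∀ x ∈ s, k x < z) → h z = ∑ x ∈ s, (r + (z - k x) - 1).choose (z - k x)) :
    ∃ p : ℚ[X], (∃ N : ℕ, ∀ z : ℕ, N ≤ z → (h z : ℚ) = p.eval (z : ℚ)) ∧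
      (r = 0 → p = 0) ∧ (1 ≤ r → p ≠ 0 ∧ p.natDegree = r - 1) := by
  have hlt : ∀ z, s.sup k + 1 ≤ z → ∀ x ∈ s, k x < z :=
    fun z hz x hx => (le_sup hx).trans_lt hz
  rcases r with _ | r
  · refine ⟨0, ⟨s.sup k + 1, fun z hz => ?_⟩, fun _ => rfl, fun h => absurd h (by omega)⟩
    rw [hh z (hlt z hz), eval_zero, Nat.cast_eq_zero]
    exact sum_eq_zero fun x hx => Nat.choose_eq_zero_of_lt (by have := hlt z hz x hx; omega)
  refine ⟨∑ x ∈ s, preHilbertPoly ℚ r (k x), ⟨s.sup k + 1, fun z hz => ?_⟩,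
    fun h => absurd h r.succ_ne_zero, fun _ => ?_⟩
  · rw [hh z (hlt z hz), eval_finsetSum, Nat.cast_sum]
    refine sum_congr rfl fun x hx => ?_
    rw [preHilbertPoly_eq_choose_sub_add ℚ r (hlt z hz x hx).le,
      show r + 1 + (z - k x) - 1 = z - k x + r by omega, Nat.choose_symm_add]
  · have hcoeff : (∑ x ∈ s, preHilbertPoly ℚ r (k x)).coeff r ≠ 0 := by
      rw [coeff_sum_preHilbertPoly_self]
      exact mul_ne_zero (by exact_mod_cast hs.card_pos.ne')
        (inv_ne_zero (by exact_mod_cast r.factorial_ne_zero))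
    refine ⟨fun h0 => hcoeff (by rw [h0, coeff_zero]), ?_⟩
    exact natDegree_eq_of_le_of_coeff_ne_zero
      (natDegree_sum_le_of_forall_le _ _ fun x _ => (natDegree_preHilbertPoly ℚ r (k x)).le) hcoeff

end Polynomial

lemma macaulay_eq_of_forall_card_lt {K : Type*} [Field K] {n m q k : ℕ}
    {P : Finset (ConeData K n m)} (h : ∀ c ∈ P, #c.2.1 < k) : macaulay K q P k = q := by
  rw [macaulay, filter_false_of_mem fun c hc => not_le.mpr (h c hc), sup_empty]
  exact max_eq_left (Nat.zero_le q)

namespace FreeMod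

variable {K : Type*} [Field K] {n m : ℕ}

lemma mdeg_eq_degree_add (e : Fin m → ℕ) (p : Fin m × (Fin n →₀ ℕ)) :
    mdeg e p = p.2.degree + e p.1 :=
  rfl

variable (K n m) in
noncomputable def monomialBasis : Module.Basis (Fin m × (Fin n →₀ ℕ)) K (FreeMod K n m) :=
  (Pi.basis fun _ => MvPolynomial.basisMonomials (Fin n) K).reindex (Equiv.sigmaEquivProd _ _)

@[simp]
lemma coe_monomialBasis : ⇑(monomialBasis K n m) = mval (n := n) (m := m) K := by
  ext1 p
  simp [monomialBasis, mval]

@[simp]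
lemma monomialBasis_repr_apply (f : FreeMod K n m) (p : Fin m × (Fin n →₀ ℕ)) :
    (monomialBasis K n m).repr f p = (f p.1).coeff p.2 :=
  rfl

lemma coeff_eq_zero_of_mem_span_mval {A : Set (Fin m × (Fin n →₀ ℕ))} {f : FreeMod K n m}
    (hf : f ∈ Submodule.span K (mval K '' A)) {p : Fin m × (Fin n →₀ ℕ)} (hp : p ∉ A) :
    (f p.1).coeff p.2 = 0 := by
  rw [← coe_monomialBasis, Module.Basis.mem_span_image] at hf
  simpa using mt (@hf p) hp

lemma span_mval_inf_span_mval (A B : Set (Fin m × (Fin n →₀ ℕ))) :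
    Submodule.span K (mval K '' A) ⊓ Submodule.span K (mval K '' B) =
      Submodule.span K (mval K '' (A ∩ B)) := by
  ext f
  simp only [Submodule.mem_inf, ← coe_monomialBasis, Module.Basis.mem_span_image,
    Set.subset_inter_iff]

lemma finrank_span_mval (s : Finset (Fin m × (Fin n →₀ ℕ))) :
    Module.finrank K (Submodule.span K (mval K '' (s : Set (Fin m × (Fin n →₀ ℕ))))) = #s := by
  have h := finrank_span_eq_card
    ((monomialBasis K n m).linearIndependent.comp ((↑) : s → _) Subtype.val_injective)
  rw [coe_monomialBasis, Fintype.card_coe] at h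
  rwa [Set.image_eq_range]

lemma degComp_eq_span (e : Fin m → ℕ) (z : ℕ) :
    degComp K n m e z = Submodule.span K (mval K '' {p | mdeg e p = z}) := by
  simp only [degComp, Set.image, eq_comm (a := mval K _), Set.mem_ofPred_eq]

lemma monComplement_eq_span (M : Submodule (MvPolynomial (Fin n) K) (FreeMod K n m)) :
    monComplement K M = Submodule.span K (mval K '' {p | mval K p ∉ M}) := by
  simp only [monComplement, Set.image, Set.mem_ofPred_eq, eq_comm (a := mval K _), and_comm]

end FreeMod

namespace PurePowers

open FreeMod

variable {K : Type*} [Field K] {n m r : ℕ} {d : Fin n → ℕ}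

variable (n r) in
/-- The variables carrying the pure powers that generate `J` (indexed from `0`). -/
def lowVars : Finset (Fin n) := {i | (i : ℕ) < n - r}

lemma card_compl_lowVars (hr : r ≤ n) : #(lowVars n r)ᶜ = r := by
  rw [card_compl, lowVars, Fin.card_filter_val_lt, Fintype.card_fin]
  omega

lemma purePowersF_eq_pi :
    purePowersF K n m r d = Submodule.pi Set.univ fun _ =>
      Ideal.span ((fun s => MvPolynomial.monomial s (1 : K)) ''
        ((fun i => Finsupp.single i (d i)) '' ↑(lowVars n r))) := by
  rw [purePowersF, ← Submodule.span_single_eq_pi]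
  congr 1
  ext f
  simp [lowVars, MvPolynomial.X_pow_eq_monomial]

lemma mval_mem_purePowersF_iff {p : Fin m × (Fin n →₀ ℕ)} :
    mval K p ∈ purePowersF K n m r d ↔ ∃ i ∈ lowVars n r, d i ≤ p.2 i := by
  rw [purePowersF_eq_pi, mval, Submodule.single_mem_pi_iff,
    MvPolynomial.mem_ideal_span_monomial_image]
  simp [Finsupp.single_le_iff]

lemma mval_notMem_purePowersF_iff {p : Fin m × (Fin n →₀ ℕ)} :
    mval K p ∉ purePowersF K n m r d ↔ ∀ i ∈ lowVars n r, p.2 i < d i := by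
  simp [mval_mem_purePowersF_iff]

variable (m r d) in
noncomputable def box : Finset (Fin m × (Fin n →₀ ℕ)) :=
  univ ×ˢ (lowVars n r).finsupp fun i => range (d i)

lemma mem_box {p : Fin m × (Fin n →₀ ℕ)} :
    p ∈ box m r d ↔ p.2.support ⊆ lowVars n r ∧ ∀ i ∈ lowVars n r, p.2 i < d i := by
  simp [box, Finset.mem_finsupp_iff]

lemma box_nonempty (hm : 0 < m) (hd : ∀ i : Fin n, (i : ℕ) < n - r → 1 ≤ d i) :
    (box m r d).Nonempty :=
  ⟨(⟨0, hm⟩, 0), mem_box.mpr ⟨by simp, fun i hi => hd i (by simpa [lowVars] using hi)⟩⟩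

variable (m r d) in
/-- Correct only once `z` is at least the degree of every box monomial, since `z - mdeg e x`
truncates (see `coe_stdMonomials`). -/
noncomputable def stdMonomials (e : Fin m → ℕ) (z : ℕ) : Finset (Fin m × (Fin n →₀ ℕ)) :=
  ((box m r d).sigma fun x => (lowVars n r)ᶜ.finsuppAntidiag (z - mdeg e x)).image
    fun x => (x.1.1, x.1.2 + x.2)

lemma coe_stdMonomials {e : Fin m → ℕ} {z : ℕ} (hz : ∀ x ∈ box m r d, mdeg e x ≤ z) :
    (stdMonomials m r d e z : Set (Fin m × (Fin n →₀ ℕ))) =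
      {p | (∀ i ∈ lowVars n r, p.2 i < d i) ∧ mdeg e p = z} := by
  ext p
  simp only [stdMonomials, coe_image, coe_sigma, Set.mem_image, Set.mem_sigma_iff, mem_coe,
    mem_finsuppAntidiag', Set.mem_ofPred_eq]
  constructor
  · rintro ⟨⟨x, c⟩, ⟨hx, hc, hcs⟩, rfl⟩
    obtain ⟨-, hxd⟩ := mem_box.mp hx
    refine ⟨fun i hi => ?_, ?_⟩
    · have : c i = 0 := Finsupp.notMem_support_iff.mp fun h => by simpa [hi] using hcs h
      simpa [this] using hxd i hi
    · have hxz := hz x hx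
      change c.degree = z - mdeg e x at hc
      rw [mdeg_eq_degree_add] at hxz hc ⊢
      simp only [map_add]
      omega
  · rintro ⟨hpd, rfl⟩
    refine ⟨⟨(p.1, p.2.filter (· ∈ lowVars n r)), p.2.filter (· ∉ lowVars n r)⟩,
      ⟨mem_box.mpr ⟨fun i hi => (mem_filter.mp hi).2, fun i hi => ?_⟩, ?_,
        fun i hi => mem_compl.mpr (mem_filter.mp hi).2⟩, by simp⟩
    · simpa [Finsupp.filter_apply, hi] using hpd i hi
    · have hsplit := congrArg Finsupp.degree (Finsupp.filter_add_filter_not p.2 (· ∈ lowVars n r))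
      change (p.2.filter (· ∉ lowVars n r)).degree =
        p.2.degree + e p.1 - ((p.2.filter (· ∈ lowVars n r)).degree + e p.1)
      rw [map_add] at hsplit
      omega

lemma card_stdMonomials (e : Fin m → ℕ) (z : ℕ) :
    #(stdMonomials m r d e z) =
      ∑ x ∈ box m r d, (#(lowVars n r)ᶜ + (z - mdeg e x) - 1).choose (z - mdeg e x) := by
  rw [stdMonomials, card_image_of_injOn, card_sigma]
  · simp only [card_finsuppAntidiag_nat_eq_choose]
  rintro ⟨x, c⟩ hxc ⟨x', c'⟩ hxc' heq
  simp only [coe_sigma, Set.mem_sigma_iff, mem_coe, mem_finsuppAntidiag] at hxc hxc'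
  obtain ⟨hj, hsum⟩ := Prod.ext_iff.mp heq
  have hx : x = x' := by
    refine Prod.ext hj ?_
    rw [← Finsupp.filter_add_of_support_subset (mem_box.mp hxc.1).1 hxc.2.2,
      ← Finsupp.filter_add_of_support_subset (mem_box.mp hxc'.1).1 hxc'.2.2]
    exact congrArg _ hsum
  subst hx
  simp only at hsum
  rw [add_left_cancel hsum]

lemma hilb_monComplement_purePowersF (hr : r ≤ n) {e : Fin m → ℕ} {z : ℕ}
    (hz : ∀ x ∈ box m r d, mdeg e x ≤ z) :
    hilb K e (monComplement K (purePowersF K n m r d)) z =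
      ∑ x ∈ box m r d, (r + (z - mdeg e x) - 1).choose (z - mdeg e x) := by
  have hcard := card_stdMonomials (r := r) (d := d) e z
  rw [card_compl_lowVars hr] at hcard
  have hstd : {p | mval K p ∉ purePowersF K n m r d} ∩ {p | mdeg e p = z} =
      {p | (∀ i ∈ lowVars n r, p.2 i < d i) ∧ mdeg e p = z} :=
    Set.ext fun p => and_congr_left' mval_notMem_purePowersF_iff
  rw [← hcard, ← finrank_span_mval (K := K), coe_stdMonomials hz, ← hstd,
    ← span_mval_inf_span_mval, ← monComplement_eq_span, ← degComp_eq_span, hilb]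

lemma exists_mem_lowVars_of_lt_card (hr : r ≤ n) {u : Finset (Fin n)} (hu : r < #u) :
    ∃ i ∈ u, i ∈ lowVars n r := by
  by_contra! h
  have := card_le_card fun i hi => mem_compl.mpr (h i hi)
  rw [card_compl_lowVars hr] at this
  omega

lemma card_le_of_cone_le_monComplement (hr : r ≤ n) {h : FreeMod K n m} (hh : h ≠ 0)
    {u : Finset (Fin n)} (hcone : cone K h ↑u ≤ monComplement K (purePowersF K n m r d)) :
    #u ≤ r := by
  by_contra! hu
  obtain ⟨i, hiu, hi⟩ := exists_mem_lowVars_of_lt_card hr hu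
  obtain ⟨j, hj⟩ := Function.ne_iff.mp hh
  obtain ⟨a, ha⟩ := MvPolynomial.ne_zero_iff.mp hj
  have hmem : MvPolynomial.monomial (Finsupp.single i (d i)) (1 : K) • h ∈
      monComplement K (purePowersF K n m r d) :=
    hcone (Submodule.subset_span ⟨_, coe_subset.mpr
      (Finsupp.support_single_subset.trans (singleton_subset_iff.mpr hiu)), rfl⟩)
  rw [monComplement_eq_span] at hmem
  have hJF : mval K (j, Finsupp.single i (d i) + a) ∈ purePowersF K n m r d :=
    mval_mem_purePowersF_iff.mpr ⟨i, hi, by simp⟩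
  have := coeff_eq_zero_of_mem_span_mval hmem (not_not.mpr hJF)
  simp only [Pi.smul_apply, smul_eq_mul, MvPolynomial.coeff_monomial_mul, one_mul] at this
  exact ha this

end PurePowers

open PurePowers

theorem stmt_10_general (K : Type*) [Field K] (n m r D : ℕ) (hm : 0 < m) (hr : r ≤ n)
    (e : Fin m → ℕ) (d : Fin n → ℕ) (hd : ∀ i : Fin n, (i : ℕ) < n - r → 1 ≤ d i)
    (P : Finset (ConeData K n m))
    (hdec : IsConeDecomp K e P (monComplement K (purePowersF K n m r d))) :
    (∃ p : Polynomial ℚ,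
      (∃ N : ℕ, ∀ z : ℕ, N ≤ z →
        (hilb K e (monComplement K (purePowersF K n m r d)) z : ℚ) = p.eval (z : ℚ)) ∧
      (r = 0 → p = 0) ∧ (1 ≤ r → p ≠ 0 ∧ p.natDegree = r - 1)) ∧
    (∀ k : ℕ, r + 1 ≤ k → k ≤ n + 1 → macaulay K D P k = D) := by
  refine ⟨Polynomial.exists_polynomial_of_eventually_eq_sum_choose (box_nonempty hm hd) (mdeg e) r
    fun z hz => hilb_monComplement_purePowersF hr fun x hx => (hz x hx).le, fun k hk _ => ?_⟩
  refine macaulay_eq_of_forall_card_lt fun c hc => ?_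
  have hcone : cone K c.1 ↑c.2.1 ≤ monComplement K (purePowersF K n m r d) :=
    hdec.2.2 ▸ le_iSup (fun c : P => cone K c.1.1 ↑c.1.2.1) ⟨c, hc⟩
  exact (card_le_of_cone_le_monComplement hr (hdec.1 c hc).1 hcone).trans_lt hk

/-- For `J = (x₁^{d₁},…,x_{n−r}^{d_{n−r}})`, the Hilbert polynomial of
`F/JF` (equivalently of `N_{JF}`) has degree `r − 1`; consequently for any `D`-exact cone
decomposition `P` of `N_{JF}`, `b_{n+1} = b_n = ⋯ = b_{r+1} = D`. -/
theorem stmt_10 (K : Type*) [Field K] (n m r D : ℕ) (hm : 0 < m) (hr : r ≤ n)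
    (e : Fin m → ℕ) (d : Fin n → ℕ) (hd : ∀ i : Fin n, (i : ℕ) < n - r → 1 ≤ d i)
    (P : Finset (ConeData K n m))
    (hdec : IsConeDecomp K e P (monComplement K (purePowersF K n m r d)))
    (hex : IsExact K D P) :
    (∃ p : Polynomial ℚ,
      (∃ N : ℕ, ∀ z : ℕ, N ≤ z →
        (hilb K e (monComplement K (purePowersF K n m r d)) z : ℚ) = p.eval (z : ℚ)) ∧
      (r = 0 → p = 0) ∧ (1 ≤ r → p ≠ 0 ∧ p.natDegree = r - 1)) ∧
    (∀ k : ℕ, r + 1 ≤ k → k ≤ n + 1 → macaulay K D P k = D) :=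
  stmt_10_general K n m r D hm hr e d hd P hdec
end

section
/- Let F be a free module over S = K[x_1,...,x_n], let M ⊆ F be a submodule generated by g_1,...,g_t, f_1,...,f_s, and let L = Sg_1 + ... + Sg_t. Fix a monomial order on S. Then M = L ⊕ ⊕_{i=1}^s f_i · N_{L_{i−1} : f_i} as K-vector spaces, where L_k = (g_1,...,g_t,f_1,...,f_k) and L_{i−1} : f_i = {p ∈ S : p·f_i ∈ L_{i−1}}. -/
open MvPolynomial

noncomputable section
variable (K : Type*) [Field K]

/-- A monomial order on `S = K[x₁,…,xₙ]`. -/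
def IsMonomialOrderS {n : ℕ} (mo : LinearOrder (Fin n →₀ ℕ)) : Prop :=
  (∀ a b γ : Fin n →₀ ℕ, mo.lt a b → mo.lt (a + γ) (b + γ)) ∧
  (∀ α γ : Fin n →₀ ℕ, γ ≠ 0 → mo.lt α (α + γ))

/-- The initial ideal of an ideal `I ⊆ S` w.r.t. a monomial order `mo`. -/
def initIdeal {n : ℕ} (mo : LinearOrder (Fin n →₀ ℕ)) (I : Ideal (MvPolynomial (Fin n) K)) :
    Ideal (MvPolynomial (Fin n) K) :=
  Ideal.span { q | ∃ p ∈ I, ∃ δ ∈ p.support, (∀ δ' ∈ p.support, mo.le δ' δ) ∧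
      q = monomial δ (1 : K) }

/-- `N_I`: the `K`-span of the monomials of `S` not in the initial ideal of `I`. -/
def normalForms {n : ℕ} (mo : LinearOrder (Fin n →₀ ℕ)) (I : Ideal (MvPolynomial (Fin n) K)) :
    Submodule K (MvPolynomial (Fin n) K) :=
  Submodule.span K { q | ∃ δ : Fin n →₀ ℕ, q = monomial δ (1 : K) ∧
      monomial δ (1 : K) ∉ initIdeal K mo I }

end


/-! Macaulay's theorem: for an ideal `I` of `S`, the normal forms `N_I` are a `K`-complement of
`I`. A nonzero element of `I` has its leading monomial in `in(I)`, and a monomial in `in(I)` can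
be rewritten modulo `I` as a combination of strictly smaller monomials, which terminates because a
monomial order is a well-order. Applied to the colon ideal `L_{i-1} : f_i`, this splits
`L_i = L_{i-1} + S f_i` as `L_{i-1} ⊕ f_i · N_{L_{i-1} : f_i}`, since `p f_i ∈ L_{i-1}` exactly
when `p ∈ L_{i-1} : f_i`. Chaining these splittings from `L_0 = L` to `L_s = M` gives the
decomposition. -/

section ChainDecomposition

variable {α : Type*} [CompleteLattice α] [IsModularLattice α]

theorem iSupIndep_of_disjoint_iSup_lt {ι : Type*} [LinearOrder ι] [Fintype ι] {c : ι → α}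
    (h : ∀ i, Disjoint (c i) (⨆ j < i, c j)) : iSupIndep c := by
  classical
  rw [iSupIndep_iff_supIndep_univ]
  induction (Finset.univ : Finset ι) using Finset.induction_on_max with
  | empty => exact Finset.supIndep_empty c
  | insert a s hlt hs =>
    exact hs.insert <|
      (h a).mono_right (Finset.sup_le fun j hj => le_iSup₂_of_le j (hlt j hj) le_rfl)

theorem iSupIndep_and_iSup_eq_of_chain {s : ℕ} {c : Fin (s + 1) → α} {A : ℕ → α}
    (hA : Monotone A) (h0 : c 0 = A 0) (hsucc : ∀ i : Fin s, A (i + 1) = A i ⊔ c i.succ)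
    (hdisj : ∀ i : Fin s, Disjoint (c i.succ) (A i)) :
    iSupIndep c ∧ ⨆ i, c i = A s := by
  have hcA : ∀ j : Fin (s + 1), c j ≤ A j :=
    Fin.cases h0.le fun i => (hsucc i).symm ▸ le_sup_right
  refine ⟨iSupIndep_of_disjoint_iSup_lt fun i => ?_, ?_⟩
  · induction i using Fin.cases with
    | zero => simp
    | succ i =>
      refine (hdisj i).mono_right (iSup₂_le fun j hj => (hcA j).trans (hA ?_))
      exact Nat.lt_succ_iff.1 (Fin.lt_def.1 hj)
  · refine le_antisymm (iSup_le fun j => (hcA j).trans (hA j.is_le)) ?_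
    suffices ∀ k ≤ s, A k ≤ ⨆ i, c i from this s le_rfl
    intro k hk
    induction k with
    | zero => exact h0 ▸ le_iSup c 0
    | succ k ih =>
      rw [hsucc ⟨k, hk⟩]
      exact sup_le (ih (Nat.le_of_succ_le hk)) (le_iSup c _)

end ChainDecomposition

namespace Submodule

variable {R A M : Type*} [CommRing R] [CommRing A] [Algebra R A] [AddCommGroup M] [Module A M]
  [Module R M] [IsScalarTower R A M] {N : Submodule A M} {x : M} {W : Submodule R A}

theorem restrictScalars_sup_span_singleton_eq
    (hW : Codisjoint ((N.colon (span A {x})).restrictScalars R) W) :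
    (N ⊔ span A {x}).restrictScalars R =
      N.restrictScalars R ⊔ W.map ((LinearMap.toSpanSingleton A M x).restrictScalars R) := by
  refine le_antisymm (fun y hy => ?_) (sup_le (restrictScalars_mono (S := R) le_sup_left) ?_)
  · obtain ⟨z, hz, _, hax, rfl⟩ := mem_sup.1 ((restrictScalars_mem R _ y).1 hy)
    obtain ⟨a, rfl⟩ := mem_span_singleton.1 hax
    obtain ⟨a₁, ha₁, a₂, ha₂, rfl⟩ := mem_sup.1 (hW.eq_top ▸ mem_top : a ∈ _ ⊔ W)
    rw [add_smul, ← add_assoc]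
    exact add_mem_sup (N.add_mem hz (mem_colon_span_singleton.1 ha₁)) ⟨a₂, ha₂, rfl⟩
  · rintro _ ⟨a, -, rfl⟩
    exact mem_sup_right (smul_mem _ a (mem_span_singleton_self x))

theorem disjoint_map_toSpanSingleton_restrictScalars
    (hW : Disjoint ((N.colon (span A {x})).restrictScalars R) W) :
    Disjoint (W.map ((LinearMap.toSpanSingleton A M x).restrictScalars R))
      (N.restrictScalars R) := by
  rw [disjoint_def]
  rintro _ ⟨a, ha, rfl⟩ hax
  have ha₀ : a = 0 := disjoint_def.1 hW a (mem_colon_span_singleton.2 hax) ha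
  simp [ha₀]

end Submodule

namespace IsMonomialOrderS

variable {n : ℕ} {mo : LinearOrder (Fin n →₀ ℕ)} (hmo : IsMonomialOrderS mo)
include hmo

theorem le_of_le {a b : Fin n →₀ ℕ} (h : a ≤ b) : mo.le a b := by
  obtain ⟨γ, rfl⟩ := exists_add_of_le h
  rcases eq_or_ne γ 0 with rfl | hγ
  · exact (add_zero a).symm ▸ mo.le_refl a
  · exact @le_of_lt _ mo.toPreorder _ _ (hmo.2 a γ hγ)

theorem add_le_add_right {a b : Fin n →₀ ℕ} (h : mo.le a b) (γ : Fin n →₀ ℕ) :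
    mo.le (a + γ) (b + γ) := by
  rcases eq_or_ne a b with rfl | hne
  · exact mo.le_refl _
  · exact @le_of_lt _ mo.toPreorder _ _
      (hmo.1 a b γ (@lt_of_le_of_ne _ mo.toPartialOrder _ _ h hne))

theorem wellFounded : WellFounded mo.lt := by
  rw [RelEmbedding.wellFounded_iff_isEmpty]
  refine ⟨fun e => ?_⟩
  obtain ⟨a, b, hab, hle⟩ :=
    (Set.isPWO_of_wellQuasiOrderedLE (Set.univ : Set (Fin n →₀ ℕ))).exists_lt (f := e)
      fun _ => Set.mem_univ _
  exact @not_lt_of_ge _ mo.toPreorder _ _ (hmo.le_of_le hle) (e.map_rel_iff.2 hab)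

end IsMonomialOrderS

theorem MvPolynomial.mem_of_forall_monomial_mem {R σ : Type*} [CommSemiring R]
    {V : Submodule R (MvPolynomial σ R)} {p : MvPolynomial σ R}
    (h : ∀ d ∈ p.support, monomial d (1 : R) ∈ V) : p ∈ V := by
  have hp : p ∈ restrictSupport R (p.support : Set (σ →₀ ℕ)) :=
    (mem_restrictSupport_iff R).2 subset_rfl
  rw [restrictSupport_eq_span] at hp
  exact Submodule.span_le.2 (Set.image_subset_iff.2 h) hp

section NormalForms

variable {K : Type*} [Field K] {n : ℕ} {mo : LinearOrder (Fin n →₀ ℕ)}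
  {I : Ideal (MvPolynomial (Fin n) K)}

theorem normalForms_eq_restrictSupport (mo : LinearOrder (Fin n →₀ ℕ))
    (I : Ideal (MvPolynomial (Fin n) K)) :
    normalForms K mo I = restrictSupport K {δ | monomial δ (1 : K) ∉ initIdeal K mo I} := by
  rw [restrictSupport_eq_span, normalForms]
  congr 1
  ext q
  exact ⟨fun ⟨δ, hq, hδ⟩ => ⟨δ, hδ, hq.symm⟩, fun ⟨δ, hδ, hq⟩ => ⟨δ, hq.symm, hδ⟩⟩

theorem monomial_mem_initIdeal {p : MvPolynomial (Fin n) K} (hp : p ∈ I) {δ : Fin n →₀ ℕ}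
    (hδ : δ ∈ p.support) (hmax : ∀ δ' ∈ p.support, mo.le δ' δ) :
    monomial δ (1 : K) ∈ initIdeal K mo I :=
  Ideal.subset_span ⟨p, hp, δ, hδ, hmax, rfl⟩

theorem exists_leading_le_of_monomial_mem_initIdeal {μ : Fin n →₀ ℕ}
    (hμ : monomial μ (1 : K) ∈ initIdeal K mo I) :
    ∃ p ∈ I, ∃ δ ∈ p.support, (∀ δ' ∈ p.support, mo.le δ' δ) ∧ δ ≤ μ := by
  have hinit : initIdeal K mo I = Ideal.span ((monomial · (1 : K)) ''
      {δ | ∃ p ∈ I, δ ∈ p.support ∧ ∀ δ' ∈ p.support, mo.le δ' δ}) := by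
    rw [initIdeal]
    congr 1
    ext q
    exact ⟨fun ⟨p, hp, δ, hδ, hmax, hq⟩ => ⟨δ, ⟨p, hp, hδ, hmax⟩, hq.symm⟩,
      fun ⟨δ, ⟨p, hp, hδ, hmax⟩, hq⟩ => ⟨p, hp, δ, hδ, hmax, hq.symm⟩⟩
  rw [hinit, mem_ideal_span_monomial_image] at hμ
  obtain ⟨δ, ⟨p, hp, hδ, hmax⟩, hle⟩ := hμ μ (by simp)
  exact ⟨p, hp, δ, hδ, hmax, hle⟩

theorem disjoint_restrictScalars_normalForms (mo : LinearOrder (Fin n →₀ ℕ))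
    (I : Ideal (MvPolynomial (Fin n) K)) :
    Disjoint (Submodule.restrictScalars K I) (normalForms K mo I) := by
  rw [Submodule.disjoint_def]
  intro p hpI hpN
  by_contra hp
  obtain ⟨δ, hδ, hmax⟩ := @Finset.exists_max_image _ _ mo p.support id (support_nonempty.2 hp)
  rw [normalForms_eq_restrictSupport, mem_restrictSupport_iff] at hpN
  exact hpN hδ (monomial_mem_initIdeal hpI hδ hmax)

/-- Cancelling the leading term of `p` against `x^μ` leaves only monomials smaller than `μ`. -/
theorem IsMonomialOrderS.lt_of_mem_support_sub (hmo : IsMonomialOrderS mo)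
    {p : MvPolynomial (Fin n) K} {δ μ d : Fin n →₀ ℕ} (hδ : δ ∈ p.support)
    (hmax : ∀ δ' ∈ p.support, mo.le δ' δ) (hle : δ ≤ μ)
    (hd : d ∈ (monomial μ (1 : K) - (p.coeff δ)⁻¹ • (monomial (μ - δ) 1 * p)).support) :
    mo.lt d μ := by
  set q := (p.coeff δ)⁻¹ • (monomial (μ - δ) (1 : K) * p)
  have hqμ : q.coeff μ = 1 := by
    rw [coeff_smul, coeff_monomial_mul', if_pos tsub_le_self, tsub_tsub_cancel_of_le hle,
      one_mul, smul_eq_mul, inv_mul_cancel₀ (mem_support_iff.1 hδ)]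
  have hne : d ≠ μ := by
    rintro rfl
    simp [hqμ] at hd
  refine @lt_of_le_of_ne _ mo.toPartialOrder _ _ ?_ hne
  rcases Finset.mem_union.1 (support_sub _ _ _ hd) with hd | hd
  · exact Finset.mem_singleton.1 (support_monomial_subset hd) ▸ mo.le_refl d
  · rw [mem_support_iff, coeff_smul, coeff_monomial_mul'] at hd
    split_ifs at hd with hγ
    · have hdδ := hmo.add_le_add_right (hmax _ (mem_support_iff.2 (right_ne_zero_of_mul
        (by simpa using hd)))) (μ - δ)
      rwa [tsub_add_cancel_of_le hγ, add_tsub_cancel_of_le hle] at hdδ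
    · simp at hd

theorem codisjoint_restrictScalars_normalForms (hmo : IsMonomialOrderS mo)
    (I : Ideal (MvPolynomial (Fin n) K)) :
    Codisjoint (Submodule.restrictScalars K I) (normalForms K mo I) := by
  rw [codisjoint_iff, eq_top_iff]
  suffices hmon :
      ∀ μ, monomial μ (1 : K) ∈ Submodule.restrictScalars K I ⊔ normalForms K mo I from
    fun p _ => mem_of_forall_monomial_mem fun μ _ => hmon μ
  intro μ
  induction μ using hmo.wellFounded.induction with | _ μ ih
  by_cases hμ : monomial μ (1 : K) ∈ initIdeal K mo I
  · obtain ⟨h, hh, δ, hδ, hmax, hle⟩ := exists_leading_le_of_monomial_mem_initIdeal hμ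
    rw [← sub_add_cancel (monomial μ (1 : K)) ((h.coeff δ)⁻¹ • (monomial (μ - δ) 1 * h))]
    refine add_mem (mem_of_forall_monomial_mem fun d hd => ih d ?_) (Submodule.mem_sup_left ?_)
    · exact hmo.lt_of_mem_support_sub hδ hmax hle hd
    · exact Submodule.smul_mem _ _ (I.mul_mem_left _ hh)
  · refine Submodule.mem_sup_right ?_
    rw [normalForms_eq_restrictSupport, monomial_mem_restrictSupport]
    exact Or.inl hμ

theorem isCompl_restrictScalars_normalForms (hmo : IsMonomialOrderS mo)
    (I : Ideal (MvPolynomial (Fin n) K)) :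
    IsCompl (Submodule.restrictScalars K I) (normalForms K mo I) :=
  ⟨disjoint_restrictScalars_normalForms mo I, codisjoint_restrictScalars_normalForms hmo I⟩

end NormalForms

/-- With `L = Sg₁ + ⋯ + Sg_t` and `L_k = (g's, f₁,…,f_k)`,
`M = L ⊕ ⊕_{i=1}^s f_i · N_{L_{i−1} : f_i}` as `K`-vector spaces. -/
theorem stmt_16 (K : Type*) [Field K] (n m t s : ℕ)
    (mo : LinearOrder (Fin n →₀ ℕ)) (hmo : IsMonomialOrderS mo)
    (g : Fin t → FreeMod K n m) (f : Fin s → FreeMod K n m)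
    (M L : Submodule (MvPolynomial (Fin n) K) (FreeMod K n m))
    (Lk : ℕ → Submodule (MvPolynomial (Fin n) K) (FreeMod K n m))
    (hM : M = Submodule.span _ (Set.range g ∪ Set.range f))
    (hL : L = Submodule.span _ (Set.range g))
    (hLk : ∀ j : ℕ, Lk j = Submodule.span _
      (Set.range g ∪ f '' { i : Fin s | (i : ℕ) < j }))
    (c : Fin (s + 1) → Submodule K (FreeMod K n m))
    (hc0 : c 0 = L.restrictScalars K)
    (hcs : ∀ i : Fin s, c i.succ = Submodule.map
      ((LinearMap.toSpanSingleton (MvPolynomial (Fin n) K) (FreeMod K n m)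
          (f i)).restrictScalars K)
      (normalForms K mo (Submodule.colon (Lk i)
        (Submodule.span (MvPolynomial (Fin n) K) {f i})))) :
    iSupIndep c ∧ (⨆ i, c i) = M.restrictScalars K := by
  have hLk_mono : Monotone Lk := fun j k hjk => by
    rw [hLk, hLk]
    exact Submodule.span_mono (Set.union_subset_union_right _
      (Set.image_mono fun i (hi : (i : ℕ) < j) => hi.trans_le hjk))
  have hLk_zero : Lk 0 = L := by simp [hLk, hL]
  have hLk_last : Lk s = M := by simp [hLk, hM]
  have hLk_succ (i : Fin s) : Lk (i + 1) = Lk i ⊔ Submodule.span _ {f i} := by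
    have hlt : {j : Fin s | (j : ℕ) < i + 1} = {j : Fin s | (j : ℕ) < i} ∪ {i} := by
      ext j
      simp only [Set.mem_ofPred_eq, Set.mem_union, Set.mem_singleton_iff, Fin.ext_iff]
      omega
    rw [hLk, hLk, ← Submodule.span_union, hlt, Set.image_union, Set.image_singleton,
      Set.union_assoc]
  obtain ⟨hindep, hsup⟩ := iSupIndep_and_iSup_eq_of_chain
    (c := c) (A := fun k => (Lk k).restrictScalars K)
    (fun j k hjk => Submodule.restrictScalars_mono (S := K) (hLk_mono hjk))
    (by rw [hc0, hLk_zero])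
    (fun i => by
      rw [hcs, hLk_succ]
      exact Submodule.restrictScalars_sup_span_singleton_eq
        (isCompl_restrictScalars_normalForms hmo _).codisjoint)
    (fun i => by
      rw [hcs]
      exact Submodule.disjoint_map_toSpanSingleton_restrictScalars
        (isCompl_restrictScalars_normalForms hmo _).disjoint)
  exact ⟨hindep, hLk_last ▸ hsup⟩
end
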